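/- (Cross Wigner function, total sum.) For all n',n ∈ {0,…,N}, the entries of the cross Wigner matrix sum to the Kronecker delta: ∑_{k=0}^{N} ∑_{l=0}^{N} W(n',n)_{k,l} = δ_{n',n}. -/

import Mathlib

open Matrix

/-- The Weyl-symmetrized operator `Ĝ_{a,b}(P,Q)`: `1/C(a+b,a)` times the sum over all
subsets `S` of `{1,…,a+b}` of size `a` of the ordered product `X_1 ⋯ X_{a+b}` with
`X_i = P` if `i ∈ S` and `X_i = Q` otherwise. -/
noncomputable def weylG {N : ℕ} (P Q : Matrix (Fin (N + 1)) (Fin (N + 1)) ℂ) (a b : ℕ) :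
    Matrix (Fin (N + 1)) (Fin (N + 1)) ℂ :=
  (((a + b).choose a : ℂ))⁻¹ •
    ∑ S ∈ Finset.univ.filter (fun S : Finset (Fin (a + b)) => S.card = a),
      (List.ofFn fun i : Fin (a + b) => if i ∈ S then P else Q).prod

/-- The matrix `Z(n',n)` with entries `Z(n',n)_{a,b} = (Ĝ_{a,b}(P,Q))_{n',n}`. -/
noncomputable def zMatCross {N : ℕ} (P Q : Matrix (Fin (N + 1)) (Fin (N + 1)) ℂ)
    (n' n : Fin (N + 1)) : Matrix (Fin (N + 1)) (Fin (N + 1)) ℂ :=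
  Matrix.of fun a b : Fin (N + 1) => weylG P Q a.val b.val n' n

/-- The cross Wigner matrix `W(n',n) = V(p)⁻ᵀ ⬝ Z(n',n) ⬝ V(q)⁻¹`, where `V(x)` is the
Vandermonde matrix on the spectrum `x` (regarded as a complex matrix). -/
noncomputable def wignerCross {N : ℕ} (P Q : Matrix (Fin (N + 1)) (Fin (N + 1)) ℂ)
    (p q : Fin (N + 1) → ℝ) (n' n : Fin (N + 1)) : Matrix (Fin (N + 1)) (Fin (N + 1)) ℂ :=
  ((Matrix.vandermonde fun k => (p k : ℂ))ᵀ)⁻¹ * zMatCross P Q n' n *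
    (Matrix.vandermonde fun l => (q l : ℂ))⁻¹

/-!
The zeroth column of a Vandermonde matrix consists of ones, so `V(x)⁻¹ 𝟙 = e₀` whenever
`V(x)` is invertible. Hence the sum of all entries of `V(p)⁻ᵀ Z V(q)⁻¹`, which is
`𝟙ᵀ V(p)⁻ᵀ Z V(q)⁻¹ 𝟙 = e₀ᵀ Z e₀`, is `Z₀₀ = (Ĝ_{0,0})_{n',n}`; and `Ĝ_{0,0}` is the
empty product, the identity matrix.
-/

namespace Matrix

variable {m : ℕ}

theorem vandermonde_mulVec_single_zero {R : Type*} [CommRing R] (v : Fin (m + 1) → R) :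
    vandermonde v *ᵥ Pi.single 0 1 = 1 := by
  ext i
  simp [vandermonde_apply]

variable {K : Type*} [Field K]

theorem vandermonde_inv_mulVec_one {v : Fin (m + 1) → K} (hv : Function.Injective v) :
    (vandermonde v)⁻¹ *ᵥ 1 = Pi.single 0 1 := by
  have hdet : IsUnit (vandermonde v).det := (det_vandermonde_ne_zero_iff.mpr hv).isUnit
  rw [← vandermonde_mulVec_single_zero v, mulVec_mulVec, nonsing_inv_mul _ hdet, one_mulVec]

theorem sum_sum_vandermonde_transpose_inv_mul_mul_vandermonde_inv {u v : Fin (m + 1) → K}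
    (hu : Function.Injective u) (hv : Function.Injective v)
    (Z : Matrix (Fin (m + 1)) (Fin (m + 1)) K) :
    ∑ k, ∑ l, ((vandermonde u)ᵀ⁻¹ * Z * (vandermonde v)⁻¹) k l = Z 0 0 := by
  have hleft : (1 : Fin (m + 1) → K) ᵥ* (vandermonde u)ᵀ⁻¹ = Pi.single 0 1 := by
    rw [← transpose_nonsing_inv, vecMul_transpose, vandermonde_inv_mulVec_one hu]
  calc ∑ k, ∑ l, ((vandermonde u)ᵀ⁻¹ * Z * (vandermonde v)⁻¹) k l
      = 1 ⬝ᵥ (((vandermonde u)ᵀ⁻¹ * Z * (vandermonde v)⁻¹) *ᵥ 1) := by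
        simp [mulVec, dotProduct]
    _ = (1 ᵥ* (vandermonde u)ᵀ⁻¹) ⬝ᵥ (Z *ᵥ ((vandermonde v)⁻¹ *ᵥ 1)) := by
        rw [← mulVec_mulVec, ← mulVec_mulVec, dotProduct_mulVec]
    _ = Z 0 0 := by simp [hleft, vandermonde_inv_mulVec_one hv]

end Matrix

theorem weylG_zero_zero {N : ℕ} (P Q : Matrix (Fin (N + 1)) (Fin (N + 1)) ℂ) :
    weylG P Q 0 0 = 1 := by
  simp [weylG, Finset.filter_singleton, Finset.eq_empty_of_isEmpty]

/-- Cross Wigner function, total sum: the entries of the cross Wigner matrix sum to the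
Kronecker delta `δ_{n',n}`. -/
theorem wignerCross_sum_eq_delta {N : ℕ}
    (P Q : Matrix (Fin (N + 1)) (Fin (N + 1)) ℂ)
    (p q : Fin (N + 1) → ℝ) (hp : Function.Injective p) (hq : Function.Injective q)
    (n' n : Fin (N + 1)) :
    ∑ k : Fin (N + 1), ∑ l : Fin (N + 1), wignerCross P Q p q n' n k l =
      if n' = n then 1 else 0 := by
  have hp' : Function.Injective fun k => (p k : ℂ) := Complex.ofReal_injective.comp hp
  have hq' : Function.Injective fun l => (q l : ℂ) := Complex.ofReal_injective.comp hq
  rw [wignerCross, sum_sum_vandermonde_transpose_inv_mul_mul_vandermonde_inv hp' hq']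
  simp only [zMatCross, of_apply, Fin.val_zero, weylG_zero_zero, one_apply]
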